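/- The variable ρ is exactly insensitive to perturbations of any single weight-function nuisance: fix j₀ ∈ {0,…,n} and a bounded 𝒢_{j₀}-measurable δ : Ω → ℝ, and let ρ̃ be obtained from ρ := ∏_{j=0}^{n} π_j + Σ_{j=0}^{n} (1_{A_j} − π_j)·w_j·∏_{k=0}^{j−1} π_k by replacing w_{j₀} with w_{j₀} + δ. Then E[ρ̃ | 𝒢_0] = E[ρ | 𝒢_0] P-almost surely (in particular ∫ ρ̃ dP = ∫ ρ dP). This holds for arbitrary bounded 𝒢_j-measurable w_j, using only π_j = E[1_{A_j} | 𝒢_j]. (This is the component of the Neyman-orthogonality of ρ with respect to the weight functions used in the proof of Theorem 2.) -/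

import Mathlib

open MeasureTheory Finset

/-! Perturbing `w_{j₀}` by `δ` changes `ρ` by `h · (1_{A_{j₀}} - π_{j₀})` with
`h = δ · ∏_{k<j₀} π_k` bounded and `𝒢_{j₀}`-measurable. Since `π_{j₀} = E[1_{A_{j₀}} | 𝒢_{j₀}]`,
pulling `h` out of `E[· | 𝒢_{j₀}]` shows that this term has zero conditional expectation given
`𝒢_{j₀}`, hence, by the tower property, also given `𝒢_0`. -/

section

variable {Ω : Type*} {m m₀ : MeasurableSpace Ω} {μ : Measure Ω}

theorem condExp_add_of_condExp_eq_zero {f g : Ω → ℝ} (hf : Integrable f μ)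
    (hf₀ : μ[f | m] =ᵐ[μ] 0) : μ[g + f | m] =ᵐ[μ] μ[g | m] := by
  by_cases hg : Integrable g μ
  · filter_upwards [condExp_add hg hf m, hf₀] with x hx h0
    simp [hx, h0]
  · have hgf : ¬Integrable (g + f) μ := fun h => hg (by simpa using h.sub hf)
    rw [condExp_of_not_integrable hg, condExp_of_not_integrable hgf]

theorem condExp_sub_eq_zero_of_ae_eq_condExp (hm : m ≤ m₀) [SigmaFinite (μ.trim hm)]
    {X π : Ω → ℝ} (hX : Integrable X μ) (hπ : π =ᵐ[μ] μ[X | m]) :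
    μ[X - π | m] =ᵐ[μ] 0 := by
  have hπ_int : Integrable π μ := integrable_condExp.congr hπ.symm
  have hπ_self : μ[π | m] =ᵐ[μ] μ[X | m] :=
    (condExp_congr_ae hπ).trans (condExp_condExp_of_le le_rfl hm)
  filter_upwards [condExp_sub hX hπ_int m, hπ_self] with x hx hx'
  simp [hx, hx']

theorem condExp_mul_eq_zero_of_stronglyMeasurable_left {h Y : Ω → ℝ}
    (hh : StronglyMeasurable[m] h) (hhY : Integrable (h * Y) μ) (hY : Integrable Y μ)
    (hY₀ : μ[Y | m] =ᵐ[μ] 0) : μ[h * Y | m] =ᵐ[μ] 0 := by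
  filter_upwards [condExp_mul_of_stronglyMeasurable_left hh hhY hY, hY₀] with x hx h0
  simp [hx, h0]

theorem condExp_eq_zero_of_le {m₁ : MeasurableSpace Ω} (hm₁ : m₁ ≤ m) (hm : m ≤ m₀)
    [SigmaFinite (μ.trim hm)] {f : Ω → ℝ} (hf₀ : μ[f | m] =ᵐ[μ] 0) : μ[f | m₁] =ᵐ[μ] 0 :=
  calc μ[f | m₁] =ᵐ[μ] μ[μ[f | m] | m₁] := (condExp_condExp_of_le hm₁ hm).symm
    _ =ᵐ[μ] μ[0 | m₁] := condExp_congr_ae hf₀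
    _ = 0 := condExp_zero

theorem abs_le_one_of_ae_eq_condExp_indicator {s : Set Ω} {π : Ω → ℝ}
    (hπ : π =ᵐ[μ] μ[s.indicator (fun _ => (1 : ℝ)) | m]) : ∀ᵐ x ∂μ, |π x| ≤ 1 := by
  have hs : ∀ᵐ x ∂μ, |s.indicator (fun _ => (1 : ℝ)) x| ≤ 1 :=
    ae_of_all _ fun x => by by_cases hx : x ∈ s <;> simp [hx]
  filter_upwards [hπ, ae_bdd_abs_condExp_of_ae_bdd_abs (m := m) hs] with x hx hb
  simpa [hx] using hb

theorem ae_abs_prod_le_one {ι : Type*} {s : Finset ι} {f : ι → Ω → ℝ}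
    (hf : ∀ i ∈ s, ∀ᵐ x ∂μ, |f i x| ≤ 1) : ∀ᵐ x ∂μ, |∏ i ∈ s, f i x| ≤ 1 := by
  filter_upwards [(Filter.eventually_all_finset s).mpr hf] with x hx
  rw [abs_prod]
  exact prod_le_one (fun _ _ => abs_nonneg _) hx

end

theorem sum_mul_ite_add_mul {ι R : Type*} [DecidableEq ι] [CommRing R] {s : Finset ι} {i₀ : ι}
    (hi₀ : i₀ ∈ s) (a b p : ι → R) (d : R) :
    ∑ i ∈ s, a i * (if i = i₀ then b i + d else b i) * p i
      = ∑ i ∈ s, a i * b i * p i + d * p i₀ * a i₀ := by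
  have hd : d * p i₀ * a i₀ = ∑ i ∈ s, if i = i₀ then a i * d * p i else 0 := by
    rw [sum_ite_eq' s i₀, if_pos hi₀]
    ring
  rw [hd, ← sum_add_distrib]
  refine sum_congr rfl fun i _ => ?_
  split_ifs <;> ring

theorem rho_orthogonal_weight_general
    {Ω : Type*} {F : MeasurableSpace Ω} {P : Measure Ω} [IsProbabilityMeasure P]
    (n : ℕ) (G : ℕ → MeasurableSpace Ω) (hG_mono : Monotone G) (hG_le : ∀ j, G j ≤ F)
    (A : ℕ → Set Ω) (hA : ∀ j ≤ n, MeasurableSet[G (j + 1)] (A j))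
    (π : ℕ → Ω → ℝ) (hπ_meas : ∀ j ≤ n, Measurable[G j] (π j))
    (hπ_ce : ∀ j ≤ n, π j =ᵐ[P] P[(A j).indicator (fun _ => (1 : ℝ)) | G j])
    (w : ℕ → Ω → ℝ)
    (j₀ : ℕ) (hj₀ : j₀ ≤ n)
    (δ : Ω → ℝ) (hδ_meas : Measurable[G j₀] δ) (Cδ : ℝ) (hδ_bd : ∀ x, |δ x| ≤ Cδ)
    (w' : ℕ → Ω → ℝ)
    (hw' : w' = fun j => if j = j₀ then (fun x => w j x + δ x) else w j)
    (ρ ρ' : Ω → ℝ)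
    (hρ : ρ = fun x =>
      (∏ j ∈ range (n + 1), π j x)
      + ∑ j ∈ range (n + 1),
          ((A j).indicator (fun _ => (1 : ℝ)) x - π j x) * w j x * ∏ k ∈ range j, π k x)
    (hρ' : ρ' = fun x =>
      (∏ j ∈ range (n + 1), π j x)
      + ∑ j ∈ range (n + 1),
          ((A j).indicator (fun _ => (1 : ℝ)) x - π j x) * w' j x * ∏ k ∈ range j, π k x) :
    P[ρ' | G 0] =ᵐ[P] P[ρ | G 0] ∧ ∫ x, ρ' x ∂P = ∫ x, ρ x ∂P := by
  set h : Ω → ℝ := fun x => δ x * ∏ k ∈ range j₀, π k x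
  set Y : Ω → ℝ := fun x => (A j₀).indicator (fun _ => (1 : ℝ)) x - π j₀ x
  have hρ'_eq : ρ' = ρ + h * Y := by
    funext x
    simp only [hρ, hρ', hw', ite_apply, Pi.add_apply, Pi.mul_apply,
      sum_mul_ite_add_mul (mem_range.mpr (Nat.lt_succ_of_le hj₀)), add_assoc]
    rfl
  have hA_int : Integrable ((A j₀).indicator fun _ => (1 : ℝ)) P :=
    (integrable_const 1).indicator (hG_le _ _ (hA j₀ hj₀))
  have hY : Integrable Y P := hA_int.sub (integrable_condExp.congr (hπ_ce j₀ hj₀).symm)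
  have hk_le : ∀ k ∈ range j₀, k ≤ j₀ := fun k hk => (mem_range.mp hk).le
  have hh : StronglyMeasurable[G j₀] h :=
    (hδ_meas.mul (measurable_prod _ fun k hk => (hπ_meas k ((hk_le k hk).trans hj₀)).mono
      (hG_mono (hk_le k hk)) le_rfl)).stronglyMeasurable
  have hh_bdd : ∀ᵐ x ∂P, ‖h x‖ ≤ Cδ := by
    filter_upwards [ae_abs_prod_le_one fun k hk =>
      abs_le_one_of_ae_eq_condExp_indicator (hπ_ce k ((hk_le k hk).trans hj₀))] with x hx
    rw [Real.norm_eq_abs, abs_mul]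
    exact (mul_le_of_le_one_right (abs_nonneg _) hx).trans (hδ_bd x)
  have hhY : Integrable (h * Y) P :=
    hY.bdd_mul (hh.mono (hG_le j₀)).aestronglyMeasurable hh_bdd
  have hY₀ : P[Y | G j₀] =ᵐ[P] 0 :=
    condExp_sub_eq_zero_of_ae_eq_condExp (hG_le j₀) hA_int (hπ_ce j₀ hj₀)
  have hcond : P[ρ' | G 0] =ᵐ[P] P[ρ | G 0] := hρ'_eq ▸ condExp_add_of_condExp_eq_zero hhY
    (condExp_eq_zero_of_le (hG_mono j₀.zero_le) (hG_le j₀)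
      (condExp_mul_eq_zero_of_stronglyMeasurable_left hh hhY hY hY₀))
  refine ⟨hcond, ?_⟩
  rw [← integral_condExp (hG_le 0), integral_congr_ae hcond, integral_condExp (hG_le 0)]

/-- **Exact insensitivity of ρ to perturbations of a single weight-function nuisance**
(component of the Neyman-orthogonality of ρ with respect to the weight functions, used in
the proof of Theorem 2). Fix `j₀ ∈ {0,…,n}` and a bounded `𝒢_{j₀}`-measurable `δ`, and let
`ρ̃` be obtained from `ρ := ∏_{j=0}^{n} π_j + Σ_{j=0}^{n} (1_{A_j} − π_j)·w_j·∏_{k<j} π_k`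
by replacing `w_{j₀}` with `w_{j₀} + δ`. Then `E[ρ̃ | 𝒢_0] = E[ρ | 𝒢_0]` P-almost surely
(in particular `∫ ρ̃ dP = ∫ ρ dP`). This holds for arbitrary bounded `𝒢_j`-measurable
`w_j`, using only `π_j = E[1_{A_j} | 𝒢_j]`. -/
theorem rho_orthogonal_weight
    {Ω : Type*} {F : MeasurableSpace Ω} {P : Measure Ω} [IsProbabilityMeasure P]
    (n : ℕ) (G : ℕ → MeasurableSpace Ω) (hG_mono : Monotone G) (hG_le : ∀ j, G j ≤ F)
    (A : ℕ → Set Ω) (hA : ∀ j ≤ n, MeasurableSet[G (j + 1)] (A j))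
    (π : ℕ → Ω → ℝ) (hπ_meas : ∀ j ≤ n, Measurable[G j] (π j))
    (ε : ℝ) (hε : 0 < ε) (hπ_bd : ∀ j ≤ n, ∀ᵐ x ∂P, ε ≤ π j x ∧ π j x ≤ 1)
    (hπ_ce : ∀ j ≤ n, π j =ᵐ[P] P[(A j).indicator (fun _ => (1 : ℝ)) | G j])
    (w : ℕ → Ω → ℝ) (hw_meas : ∀ j ≤ n, Measurable[G j] (w j))
    (Cw : ℝ) (hw_bd : ∀ j ≤ n, ∀ x, |w j x| ≤ Cw)
    (j₀ : ℕ) (hj₀ : j₀ ≤ n)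
    (δ : Ω → ℝ) (hδ_meas : Measurable[G j₀] δ) (Cδ : ℝ) (hδ_bd : ∀ x, |δ x| ≤ Cδ)
    (w' : ℕ → Ω → ℝ)
    (hw' : w' = fun j => if j = j₀ then (fun x => w j x + δ x) else w j)
    (ρ ρ' : Ω → ℝ)
    (hρ : ρ = fun x =>
      (∏ j ∈ range (n + 1), π j x)
      + ∑ j ∈ range (n + 1),
          ((A j).indicator (fun _ => (1 : ℝ)) x - π j x) * w j x * ∏ k ∈ range j, π k x)
    (hρ' : ρ' = fun x =>
      (∏ j ∈ range (n + 1), π j x)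
      + ∑ j ∈ range (n + 1),
          ((A j).indicator (fun _ => (1 : ℝ)) x - π j x) * w' j x * ∏ k ∈ range j, π k x) :
    P[ρ' | G 0] =ᵐ[P] P[ρ | G 0] ∧ ∫ x, ρ' x ∂P = ∫ x, ρ x ∂P :=
  rho_orthogonal_weight_general n G hG_mono hG_le A hA π hπ_meas hπ_ce w j₀ hj₀ δ hδ_meas Cδ hδ_bd
    w' hw' ρ ρ' hρ hρ'
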